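/- arXiv:2307.15796 — 6 statements merged into one kernel-verified Lean document; each statement's English description precedes it below -/
import Mathlib

section
/- If $F_Y$ is a distribution function with survival function $\bar{F}_Y$ satisfying $\lim_{x\to\infty}\bar{F}_Y(x-t)/\bar{F}_Y(x)=e^{t\beta}$ for all $t\in\mathbb{R}$ with $\beta>0$, then its quantile function satisfies $F_Y^{-1}(u) \sim -\log(1-u)/\beta$ as $u\uparrow 1$. -/
open Filter Topology

/-- Telescoping estimate for a function whose unit increments are controlled. -/
lemma telescope_aux (g : ℝ → ℝ) (X β ε : ℝ)
    (H : ∀ x, X ≤ x → β - ε ≤ g x - g (x+1) ∧ g x - g (x+1) ≤ β + ε) :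
    ∀ n : ℕ, ∀ x, X ≤ x →
      g x - n*(β+ε) ≤ g (x + n) ∧ g (x + n) ≤ g x - n*(β-ε) := by
  intro n
  induction n with
  | zero => intro x hx; simp
  | succ n ih =>
    intro x hx
    obtain ⟨h1, h2⟩ := ih x hx
    have hxn : X ≤ x + n := by
      have : (0:ℝ) ≤ n := Nat.cast_nonneg n
      linarith
    obtain ⟨h3, h4⟩ := H (x + n) hxn
    constructor <;> · push_cast; ring_nf; ring_nf at h1 h2 h3 h4 ⊢; nlinarith

set_option maxHeartbeats 1000000 in
/-- If `F` is a distribution function whose survival function has an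
exponential tail with index `β > 0`, then the quantile function satisfies
`F⁻¹(u) ~ -log(1-u)/β` as `u ↑ 1`. -/
theorem quantile_asymptotics_of_exponential_tail
    (F : ℝ → ℝ) (β : ℝ) (hβ : 0 < β)
    (hmono : Monotone F)
    (hbot : Tendsto F atBot (nhds 0)) (htop : Tendsto F atTop (nhds 1))
    (htail : ∀ t : ℝ,
      Tendsto (fun x => (1 - F (x - t)) / (1 - F x)) atTop (nhds (Real.exp (t * β)))) :
    Tendsto (fun u => (sInf {x : ℝ | u ≤ F x}) / (-Real.log (1 - u) / β))
      (nhdsWithin 1 (Set.Iio 1)) (nhds 1) := by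
  have hF1 : ∀ x, F x ≤ 1 := fun x =>
    ge_of_tendsto htop (eventually_atTop.2 ⟨x, fun y hy => hmono hy⟩)
  have hSpos : ∀ x, 0 < 1 - F x := by
    by_contra h
    push_neg at h
    obtain ⟨x0, hx0⟩ := h
    have h0 : (fun x => (1 - F (x - 0)) / (1 - F x)) =ᶠ[atTop] fun _ => (0:ℝ) := by
      filter_upwards [eventually_ge_atTop x0] with x hx
      have h1 : F x = 1 := le_antisymm (hF1 x) (by have := hmono hx; linarith)
      simp [h1]
    have h2 : Tendsto (fun x => (1 - F (x - 0)) / (1 - F x)) atTop (nhds 0) :=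
      Tendsto.congr' h0.symm tendsto_const_nhds
    have h3 := tendsto_nhds_unique h2 (htail 0)
    rw [zero_mul, Real.exp_zero] at h3
    norm_num at h3
  set g : ℝ → ℝ := fun x => Real.log (1 - F x) with hg
  have hganti : ∀ ⦃x y : ℝ⦄, x ≤ y → g y ≤ g x := fun x y h =>
    Real.log_le_log (hSpos y) (by have := hmono h; linarith)
  -- the unit increments of g tend to β
  have hdiff : Tendsto (fun x => g (x-1) - g x) atTop (nhds β) := by
    have h1 := (htail 1).log (by positivity)
    rw [Real.log_exp, one_mul] at h1
    refine h1.congr fun x => ?_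
    rw [Real.log_div (ne_of_gt (hSpos _)) (ne_of_gt (hSpos _))]
  -- hence g x / x → -β
  have hglin : Tendsto (fun x => g x / x) atTop (nhds (-β)) := by
    rw [Metric.tendsto_nhds]
    intro δ hδ
    set ε : ℝ := min (δ/3) (β/2) with hε
    have hε0 : 0 < ε := lt_min (by linarith) (by linarith)
    have hεβ : ε < β := lt_of_le_of_lt (min_le_right _ _) (by linarith)
    have hεδ : 2*ε < δ := by
      have := min_le_left (δ/3) (β/2); simp only [← hε] at this; linarith
    obtain ⟨X, hX⟩ := eventually_atTop.1
      ((hdiff.eventually (Metric.ball_mem_nhds β hε0)).mono (fun x hx => hx))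
    have H : ∀ y, X ≤ y → β - ε ≤ g y - g (y+1) ∧ g y - g (y+1) ≤ β + ε := by
      intro y hy
      have := hX (y+1) (by linarith)
      rw [Real.dist_eq, abs_lt] at this
      have he : (y+1) - 1 = y := by ring
      rw [he] at this
      constructor <;> linarith [this.1, this.2]
    have htel := telescope_aux g X β ε H
    set C : ℝ := g X + (X+1)*(β-ε) with hC
    set D : ℝ := g (X+1) + X*(β+ε) with hD
    -- pointwise bounds for x ≥ X+1
    have hbound : ∀ x, X + 1 ≤ x → g x ≤ C - x*(β-ε) ∧ D - x*(β+ε) ≤ g x := by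
      intro x hx
      set n : ℕ := ⌊x - X⌋₊ with hn
      have hxX : (0:ℝ) ≤ x - X := by linarith
      have hn1 : (n:ℝ) ≤ x - X := Nat.floor_le hxX
      have hn2 : x - X < n + 1 := Nat.lt_floor_add_one _
      set x' : ℝ := x - n with hx'
      have hx'1 : X ≤ x' := by simp only [hx']; linarith
      have hx'2 : x' ≤ X + 1 := by simp only [hx']; linarith
      have hxeq : x' + n = x := by simp [hx']
      obtain ⟨hl, hr⟩ := htel n x' hx'1
      rw [hxeq] at hl hr
      constructor
      · have hgx' : g x' ≤ g X := hganti hx'1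
        have : (n:ℝ)*(β-ε) ≥ (x - X - 1)*(β-ε) :=
          mul_le_mul_of_nonneg_right (by linarith) (by linarith)
        nlinarith
      · have hgx' : g (X+1) ≤ g x' := hganti hx'2
        have : (n:ℝ)*(β+ε) ≤ (x - X)*(β+ε) :=
          mul_le_mul_of_nonneg_right hn1 (by linarith)
        nlinarith
    -- eventual bound on g x / x
    have hthr : ∀ᶠ x in atTop, X + 1 ≤ x ∧ 1 ≤ x ∧ |C| ≤ ε * x ∧ |D| ≤ ε * x := by
      have h1 := eventually_ge_atTop (X+1)
      have h2 := eventually_ge_atTop (1:ℝ)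
      have h3 := eventually_ge_atTop (|C|/ε)
      have h4 := eventually_ge_atTop (|D|/ε)
      filter_upwards [h1, h2, h3, h4] with x hx1 hx2 hx3 hx4
      refine ⟨hx1, hx2, ?_, ?_⟩
      · rw [div_le_iff₀ hε0] at hx3; linarith [hx3]
      · rw [div_le_iff₀ hε0] at hx4; linarith [hx4]
    filter_upwards [hthr] with x ⟨hx1, hx2, hx3, hx4⟩
    obtain ⟨hu, hlo⟩ := hbound x hx1
    have hx0 : (0:ℝ) < x := by linarith
    rw [Real.dist_eq, abs_lt]
    have habs1 : C ≤ ε * x := le_trans (le_abs_self C) hx3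
    have habs2 : -(ε * x) ≤ D := by
      have := neg_abs_le D; linarith
    have heq : g x / x - (-β) = (g x + β*x)/x := by
      field_simp; ring
    rw [heq]
    constructor
    · rw [lt_div_iff₀ hx0]
      nlinarith [hlo]
    · rw [div_lt_iff₀ hx0]
      nlinarith [hu]
  -- quantile
  set Q : ℝ → ℝ := fun u => sInf {x : ℝ | u ≤ F x} with hQ
  have hne : ∀ u : ℝ, u < 1 → {x : ℝ | u ≤ F x}.Nonempty := by
    intro u hu
    obtain ⟨x, hx⟩ := (htop.eventually (eventually_gt_nhds hu)).exists
    exact ⟨x, le_of_lt hx⟩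
  have hbdd : ∀ u : ℝ, 0 < u → BddBelow {x : ℝ | u ≤ F x} := by
    intro u hu
    obtain ⟨x0, hx0⟩ := (hbot.eventually (eventually_lt_nhds hu)).exists
    refine ⟨x0, fun y hy => ?_⟩
    by_contra hc
    push_neg at hc
    exact absurd (le_trans hy (hmono (le_of_lt hc))) (not_le.2 hx0)
  have hQge : ∀ M : ℝ, ∀ᶠ u in nhdsWithin (1:ℝ) (Set.Iio 1), M ≤ Q u := by
    intro M
    have hFM : F M < 1 := by linarith [hSpos M]
    have h1 : ∀ᶠ u in nhdsWithin (1:ℝ) (Set.Iio 1), F M < u :=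
      eventually_nhdsWithin_of_eventually_nhds (eventually_gt_nhds hFM)
    filter_upwards [h1, self_mem_nhdsWithin] with u hu hu1
    refine le_csInf (hne u hu1) fun y hy => ?_
    by_contra hc
    push_neg at hc
    exact absurd (le_trans hy (hmono (le_of_lt hc))) (not_le.2 hu)
  -- key sandwich for quantiles
  have hupper : ∀ u : ℝ, u < 1 → u ≤ F (Q u + 1) := by
    intro u hu
    obtain ⟨y, hy, hylt⟩ := exists_lt_of_csInf_lt (hne u hu) (lt_add_one (Q u))
    exact le_trans hy (hmono (le_of_lt hylt))
  have hlower : ∀ u : ℝ, 0 < u → F (Q u - 1) < u := by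
    intro u hu
    by_contra hc
    push_neg at hc
    have : Q u ≤ Q u - 1 := csInf_le (hbdd u hu) hc
    linarith
  -- L tends to atTop
  have hL : Tendsto (fun u : ℝ => -Real.log (1 - u)) (nhdsWithin (1:ℝ) (Set.Iio 1)) atTop := by
    have h1 : Tendsto (fun u : ℝ => 1 - u) (nhdsWithin (1:ℝ) (Set.Iio 1)) (nhdsWithin (0:ℝ) (Set.Ioi 0)) := by
      rw [tendsto_nhdsWithin_iff]
      constructor
      · have h2 : Tendsto (fun u : ℝ => 1 - u) (nhds 1) (nhds (1 - 1)) :=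
          (continuous_const.sub continuous_id).tendsto 1
        rw [sub_self] at h2
        exact h2.mono_left nhdsWithin_le_nhds
      · filter_upwards [self_mem_nhdsWithin] with u hu
        simp only [Set.mem_Iio] at hu
        simp [Set.mem_Ioi]; linarith
    exact tendsto_neg_atBot_atTop.comp (Real.tendsto_log_nhdsGT_zero.comp h1)
  -- final assembly
  rw [Metric.tendsto_nhds]
  intro ε' hε'0
  set ε : ℝ := min (β/2) (β*ε'/4) with hεdef
  have hε0 : 0 < ε := lt_min (by linarith) (by positivity)
  have hε1 : ε ≤ β/2 := min_le_left _ _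
  have hε2 : ε ≤ β*ε'/4 := min_le_right _ _
  have hεβ : 0 < β - ε := by linarith
  have hev : ∀ᶠ x in atTop, -(β+ε)*x ≤ g x ∧ g x ≤ -(β-ε)*x := by
    have h1 : ∀ᶠ x in atTop, |g x / x - (-β)| < ε := by
      have h2 := Metric.tendsto_nhds.1 hglin ε hε0
      simpa [Real.dist_eq] using h2
    filter_upwards [h1, eventually_gt_atTop 0] with x hx hx0
    rw [abs_lt] at hx
    constructor
    · have h3 : -(β+ε) < g x / x := by linarith [hx.1]
      rw [lt_div_iff₀ hx0] at h3
      linarith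
    · have h4 : g x / x < -(β-ε) := by linarith [hx.2]
      rw [div_lt_iff₀ hx0] at h4
      linarith
  obtain ⟨X, hX⟩ := eventually_atTop.1 hev
  have hu0 : ∀ᶠ u in nhdsWithin (1:ℝ) (Set.Iio 1), (0:ℝ) < u :=
    eventually_nhdsWithin_of_eventually_nhds (eventually_gt_nhds (by norm_num))
  filter_upwards [hu0, self_mem_nhdsWithin, hQge (X+1),
      hL.eventually_ge_atTop ((4*β+ε')/ε')] with u hu0' hu1' hQb hLb
  have hu1 : u < 1 := hu1'
  set q : ℝ := Q u with hqdef
  set L : ℝ := -Real.log (1-u) with hLdef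
  have hLb' : 4*β + ε' ≤ L*ε' := by
    rw [div_le_iff₀ hε'0] at hLb; linarith
  have hL0 : 0 < L := by nlinarith
  obtain ⟨ha1, ha2⟩ := hX (q-1) (by linarith)
  obtain ⟨hb1, hb2⟩ := hX (q+1) (by linarith)
  have hg1 : g (q+1) ≤ Real.log (1-u) :=
    Real.log_le_log (hSpos _) (by linarith [hupper u hu1])
  have hg2 : Real.log (1-u) ≤ g (q-1) :=
    Real.log_le_log (by linarith) (by linarith [hlower u hu0'])
  have hlogL : Real.log (1-u) = -L := by rw [hLdef]; ring
  rw [hlogL] at hg1 hg2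
  have h1 : L ≤ (β+ε)*(q+1) := by linarith [hb1, hg1]
  have h2 : (β-ε)*(q-1) ≤ L := by linarith [ha2, hg2]
  rw [div_div_eq_mul_div, Real.dist_eq, abs_lt]
  have hfrac : q*β/L - 1 = (q*β - L)/L := by field_simp
  have key1 := mul_le_mul_of_nonneg_right h1 hβ.le
  have key2 := mul_le_mul_of_nonneg_right h2 hβ.le
  have keyA := mul_le_mul_of_nonneg_left hLb' hβ.le
  have keyB := mul_le_mul_of_nonneg_right hε2 hL0.le
  have keyC : ε*(ε'*L) ≤ (β/2)*(ε'*L) :=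
    mul_le_mul_of_nonneg_right hε1 (mul_nonneg hε'0.le hL0.le)
  have keyD : 0 ≤ ε'*L*ε := mul_nonneg (mul_nonneg hε'0.le hL0.le) hε0.le
  constructor
  · rw [hfrac, lt_div_iff₀ hL0]
    nlinarith [key1, keyA, keyB, keyD, mul_pos hβ hε'0, hβ.le, hε0.le]
  · rw [hfrac, div_lt_iff₀ hL0]
    nlinarith [key2, keyA, keyB, keyC, mul_pos hβ hε'0, hβ.le, hε0.le]
end

section
/- Let $a,b,c,d\in[0,\infty)$ with $ad-bc\neq 0$, and define $f(x_1,x_2)=\frac{|ax_1-bx_2|+|cx_1-dx_2|}{|ad-bc|}$. Then the infimum of $f$ over the region $x_1\geq 1, x_2\geq 1$ equals $\min\{\max(1/a,1/b),\ \max(1/c,1/d),\ \frac{|a-b|+|c-d|}{|ad-bc|}\}$, with the convention that $1/0=+\infty$. -/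
/-!
Write `u = a x₁ - b x₂`, `v = c x₁ - d x₂` and `D = ad - bc`; exchanging the pairs `(a, b)` and
`(c, d)` changes neither side, so we may take `D > 0`. Then `D x₁ = d u - b v` and
`D x₂ = c u - a v`, so on the quadrant `D ≤ d u - b v` and `D ≤ c u - a v`. A sign analysis of
`u, v` turns these into `D ≤ p (|u| + |v|)` for both entries `p` of one pair, except when
`u ≥ 0 ≥ v`, `a ≥ b` and `d ≥ c`, where `|u| + |v| = (a - c) x₁ + (d - b) x₂ ≥ |a - b| + |c - d|`.
Conversely the three values are attained: at `(1, 1)`, and on the lines `u = 0` and `v = 0`.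
-/

open scoped ENNReal

namespace QuadrantInf

noncomputable def objective (a b c d x₁ x₂ : ℝ) : ℝ≥0∞ :=
  ENNReal.ofReal ((|a * x₁ - b * x₂| + |c * x₁ - d * x₂|) / |a * d - b * c|)

noncomputable def candidate (a b c d : ℝ) : ℝ≥0∞ :=
  min (min (max (ENNReal.ofReal a)⁻¹ (ENNReal.ofReal b)⁻¹)
      (max (ENNReal.ofReal c)⁻¹ (ENNReal.ofReal d)⁻¹))
    (ENNReal.ofReal ((|a - b| + |c - d|) / |a * d - b * c|))

theorem abs_det_swap (a b c d : ℝ) : |c * b - d * a| = |a * d - b * c| := by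
  rw [← abs_neg]; ring_nf

theorem objective_swap_pairs (a b c d x₁ x₂ : ℝ) :
    objective c d a b x₁ x₂ = objective a b c d x₁ x₂ := by
  rw [objective, objective, abs_det_swap a b c d, add_comm]

theorem objective_swap_coords (a b c d x₁ x₂ : ℝ) :
    objective b a d c x₂ x₁ = objective a b c d x₁ x₂ := by
  rw [objective, objective, ← abs_neg (b * c - a * d), ← abs_neg (b * x₂ - a * x₁),
    ← abs_neg (d * x₂ - c * x₁)]
  ring_nf

theorem candidate_swap (a b c d : ℝ) : candidate c d a b = candidate a b c d := by
  rw [candidate, candidate, abs_det_swap a b c d, min_comm (max _ _), add_comm |c - d|]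

theorem objective_one_one (a b c d : ℝ) :
    objective a b c d 1 1 = ENNReal.ofReal ((|a - b| + |c - d|) / |a * d - b * c|) := by
  simp [objective]

theorem objective_div_one {a b c d : ℝ} (ha : 0 < a) (hdet : a * d - b * c ≠ 0) :
    objective a b c d (b / a) 1 = (ENNReal.ofReal a)⁻¹ := by
  have hu : a * (b / a) - b * 1 = 0 := by field_simp; ring
  have hv : c * (b / a) - d * 1 = -((a * d - b * c) / a) := by field_simp; ring
  rw [objective, hu, hv, abs_zero, zero_add, abs_neg, abs_div, abs_of_pos ha,
    div_div_cancel_left' (abs_ne_zero.2 hdet), ENNReal.ofReal_inv_of_pos ha]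

theorem iInf_objective_le_max_inv (a b c d : ℝ) (hdet : a * d - b * c ≠ 0) :
    ⨅ x₁ ∈ Set.Ici (1 : ℝ), ⨅ x₂ ∈ Set.Ici (1 : ℝ), objective a b c d x₁ x₂
      ≤ max (ENNReal.ofReal a)⁻¹ (ENNReal.ofReal b)⁻¹ := by
  rcases le_or_gt a 0 with ha | ha
  · simp [ENNReal.ofReal_of_nonpos ha]
  rcases le_or_gt b 0 with hb | hb
  · simp [ENNReal.ofReal_of_nonpos hb]
  rcases le_total a b with hab | hba
  · calc _ ≤ objective a b c d (b / a) 1 :=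
          iInf₂_le_of_le _ ((one_le_div ha).2 hab) (iInf₂_le _ Set.self_mem_Ici)
      _ = (ENNReal.ofReal a)⁻¹ := objective_div_one ha hdet
      _ ≤ _ := le_max_left _ _
  · have hdet' : b * c - a * d ≠ 0 := by rwa [← neg_sub, neg_ne_zero]
    calc _ ≤ objective a b c d 1 (a / b) :=
          iInf₂_le_of_le _ Set.self_mem_Ici (iInf₂_le _ ((one_le_div hb).2 hba))
      _ = (ENNReal.ofReal b)⁻¹ := by rw [← objective_swap_coords, objective_div_one hb hdet']
      _ ≤ _ := le_max_right _ _

theorem iInf_objective_le_candidate (a b c d : ℝ) (hdet : a * d - b * c ≠ 0) :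
    ⨅ x₁ ∈ Set.Ici (1 : ℝ), ⨅ x₂ ∈ Set.Ici (1 : ℝ), objective a b c d x₁ x₂
      ≤ candidate a b c d := by
  refine le_min (le_min (iInf_objective_le_max_inv a b c d hdet) ?_) ?_
  · have hdet' : c * b - d * a ≠ 0 := by rwa [← abs_ne_zero, abs_det_swap, abs_ne_zero]
    simpa only [objective_swap_pairs] using iInf_objective_le_max_inv c d a b hdet'
  · rw [← objective_one_one]
    exact iInf₂_le_of_le _ Set.self_mem_Ici (iInf₂_le _ Set.self_mem_Ici)

theorem inv_ofReal_le_ofReal_div {a D F : ℝ} (hF : 0 ≤ F) (hD : 0 < D) (h : D ≤ a * F) :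
    (ENNReal.ofReal a)⁻¹ ≤ ENNReal.ofReal (F / D) := by
  have ha : 0 < a := by
    by_contra! ha
    nlinarith [mul_nonpos_of_nonpos_of_nonneg ha hF]
  rw [← ENNReal.ofReal_inv_of_pos ha]
  refine ENNReal.ofReal_le_ofReal ?_
  rw [le_div_iff₀ hD, inv_mul_le_iff₀ ha]
  exact h

theorem det_le_of_one_le {a b c d x₁ x₂ : ℝ} (hD : 0 < a * d - b * c) (hx₁ : 1 ≤ x₁)
    (hx₂ : 1 ≤ x₂) :
    a * d - b * c ≤ d * (a * x₁ - b * x₂) - b * (c * x₁ - d * x₂) ∧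
      a * d - b * c ≤ c * (a * x₁ - b * x₂) - a * (c * x₁ - d * x₂) :=
  ⟨by nlinarith [le_mul_of_one_le_right hD.le hx₁], by nlinarith [le_mul_of_one_le_right hD.le hx₂]⟩

theorem det_le_mul_pair_or_le_of_mixed_sign {a b c d x₁ x₂ u v : ℝ} (hD : 0 < a * d - b * c)
    (hx₁ : 1 ≤ x₁) (hx₂ : 1 ≤ x₂) (hu_def : a * x₁ - b * x₂ = u) (hv_def : c * x₁ - d * x₂ = v)
    (hu : 0 ≤ u) (hv : v ≤ 0) :
    (a * d - b * c ≤ a * (u - v) ∧ a * d - b * c ≤ b * (u - v)) ∨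
      (a * d - b * c ≤ c * (u - v) ∧ a * d - b * c ≤ d * (u - v)) ∨
      |a - b| + |c - d| ≤ u - v := by
  obtain ⟨hD₁, hD₂⟩ := hu_def ▸ hv_def ▸ det_le_of_one_le hD hx₁ hx₂
  rcases le_total c a with hca | hac
  swap
  · have hbd : b ≤ d := by nlinarith
    have hcF : a * d - b * c ≤ c * (u - v) := by
      nlinarith [mul_nonneg (sub_nonneg.2 hac) (neg_nonneg.2 hv)]
    have hdF : a * d - b * c ≤ d * (u - v) := by
      nlinarith [mul_nonneg (sub_nonneg.2 hbd) (neg_nonneg.2 hv)]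
    exact Or.inr <| Or.inl ⟨hcF, hdF⟩
  have haF : a * d - b * c ≤ a * (u - v) := by nlinarith [mul_nonneg (sub_nonneg.2 hca) hu]
  rcases le_total d b with hdb | hbd
  · exact Or.inl ⟨haF, by nlinarith [mul_nonneg (sub_nonneg.2 hdb) hu]⟩
  have hdF : a * d - b * c ≤ d * (u - v) := by
    nlinarith [mul_nonneg (sub_nonneg.2 hbd) (neg_nonneg.2 hv)]
  rcases le_total a b with hab | hba
  · have hbF : a * d - b * c ≤ b * (u - v) := by
      nlinarith [mul_nonneg (sub_nonneg.2 hab) (sub_nonneg.2 hu),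
        mul_nonneg (sub_nonneg.2 hab) (neg_nonneg.2 hv)]
    exact Or.inl ⟨haF, hbF⟩
  rcases le_total d c with hdc | hcd
  · have hcF : a * d - b * c ≤ c * (u - v) := by
      nlinarith [mul_nonneg (sub_nonneg.2 hdc) (sub_nonneg.2 hu),
        mul_nonneg (sub_nonneg.2 hdc) (neg_nonneg.2 hv)]
    exact Or.inr <| Or.inl ⟨hcF, hdF⟩
  refine Or.inr <| Or.inr ?_
  rw [abs_of_nonneg (sub_nonneg.2 hba), abs_of_nonpos (sub_nonpos.2 hcd), ← hu_def, ← hv_def]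
  nlinarith [mul_nonneg (sub_nonneg.2 hca) (sub_nonneg.2 hx₁),
    mul_nonneg (sub_nonneg.2 hbd) (sub_nonneg.2 hx₂)]

theorem det_le_mul_pair_or_le_of_one_le {a b c d x₁ x₂ : ℝ} (ha : 0 ≤ a) (hb : 0 ≤ b)
    (hc : 0 ≤ c) (hd : 0 ≤ d) (hD : 0 < a * d - b * c) (hx₁ : 1 ≤ x₁) (hx₂ : 1 ≤ x₂) :
    (a * d - b * c ≤ a * (|a * x₁ - b * x₂| + |c * x₁ - d * x₂|) ∧
        a * d - b * c ≤ b * (|a * x₁ - b * x₂| + |c * x₁ - d * x₂|)) ∨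
      (a * d - b * c ≤ c * (|a * x₁ - b * x₂| + |c * x₁ - d * x₂|) ∧
        a * d - b * c ≤ d * (|a * x₁ - b * x₂| + |c * x₁ - d * x₂|)) ∨
      |a - b| + |c - d| ≤ |a * x₁ - b * x₂| + |c * x₁ - d * x₂| := by
  obtain ⟨u, hu_def⟩ : ∃ u, a * x₁ - b * x₂ = u := ⟨_, rfl⟩
  obtain ⟨v, hv_def⟩ : ∃ v, c * x₁ - d * x₂ = v := ⟨_, rfl⟩
  obtain ⟨hD₁, hD₂⟩ := hu_def ▸ hv_def ▸ det_le_of_one_le hD hx₁ hx₂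
  rw [hu_def, hv_def]
  rcases le_total u 0 with hu | hu <;> rcases le_total v 0 with hv | hv
  · left
    rw [abs_of_nonpos hu, abs_of_nonpos hv]
    constructor <;> nlinarith [mul_nonneg ha (neg_nonneg.2 hu), mul_nonneg hb (neg_nonneg.2 hu),
      mul_nonneg hc (neg_nonneg.2 hu), mul_nonneg hd (neg_nonneg.2 hu)]
  · nlinarith [mul_nonneg hd (neg_nonneg.2 hu), mul_nonneg hb hv]
  · rw [abs_of_nonneg hu, abs_of_nonpos hv, ← sub_eq_add_neg]
    exact det_le_mul_pair_or_le_of_mixed_sign hD hx₁ hx₂ hu_def hv_def hu hv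
  · right; left
    rw [abs_of_nonneg hu, abs_of_nonneg hv]
    constructor <;> nlinarith [mul_nonneg ha hv, mul_nonneg hb hv, mul_nonneg hc hv,
      mul_nonneg hd hv]

theorem candidate_le_objective_of_det_pos {a b c d x₁ x₂ : ℝ} (ha : 0 ≤ a) (hb : 0 ≤ b)
    (hc : 0 ≤ c) (hd : 0 ≤ d) (hD : 0 < a * d - b * c) (hx₁ : 1 ≤ x₁) (hx₂ : 1 ≤ x₂) :
    candidate a b c d ≤ objective a b c d x₁ x₂ := by
  have hF : 0 ≤ |a * x₁ - b * x₂| + |c * x₁ - d * x₂| := by positivity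
  rw [candidate, objective, abs_of_pos hD]
  rcases det_le_mul_pair_or_le_of_one_le ha hb hc hd hD hx₁ hx₂ with
    ⟨h₁, h₂⟩ | ⟨h₁, h₂⟩ | h
  · exact min_le_of_left_le <| min_le_of_left_le <|
      max_le (inv_ofReal_le_ofReal_div hF hD h₁) (inv_ofReal_le_ofReal_div hF hD h₂)
  · exact min_le_of_left_le <| min_le_of_right_le <|
      max_le (inv_ofReal_le_ofReal_div hF hD h₁) (inv_ofReal_le_ofReal_div hF hD h₂)
  · exact min_le_of_right_le <| ENNReal.ofReal_le_ofReal <| div_le_div_of_nonneg_right h hD.le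

theorem candidate_le_objective {a b c d x₁ x₂ : ℝ} (ha : 0 ≤ a) (hb : 0 ≤ b) (hc : 0 ≤ c)
    (hd : 0 ≤ d) (hdet : a * d - b * c ≠ 0) (hx₁ : 1 ≤ x₁) (hx₂ : 1 ≤ x₂) :
    candidate a b c d ≤ objective a b c d x₁ x₂ := by
  rcases hdet.lt_or_gt with hD | hD
  · rw [← candidate_swap, ← objective_swap_pairs]
    exact candidate_le_objective_of_det_pos hc hd ha hb (by linarith) hx₁ hx₂
  · exact candidate_le_objective_of_det_pos ha hb hc hd hD hx₁ hx₂

end QuadrantInf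

/-- For `a,b,c,d ≥ 0` with `ad - bc ≠ 0` and
`f(x₁,x₂) = (|ax₁-bx₂| + |cx₁-dx₂|)/|ad-bc|`, the infimum of `f` over `x₁,x₂ ≥ 1`
equals `min{max(1/a,1/b), max(1/c,1/d), (|a-b|+|c-d|)/|ad-bc|}`, with `1/0 = ∞`
interpreted in the extended nonnegative reals. -/
theorem inf_piecewise_linear_on_quadrant
    (a b c d : ℝ) (ha : 0 ≤ a) (hb : 0 ≤ b) (hc : 0 ≤ c) (hd : 0 ≤ d)
    (hdet : a * d - b * c ≠ 0) :
    (⨅ x1 ∈ Set.Ici (1:ℝ), ⨅ x2 ∈ Set.Ici (1:ℝ),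
        ENNReal.ofReal ((|a * x1 - b * x2| + |c * x1 - d * x2|) / |a * d - b * c|))
      = min (min (max (ENNReal.ofReal a)⁻¹ (ENNReal.ofReal b)⁻¹)
                 (max (ENNReal.ofReal c)⁻¹ (ENNReal.ofReal d)⁻¹))
            (ENNReal.ofReal ((|a - b| + |c - d|) / |a * d - b * c|)) := by
  show ⨅ x₁ ∈ Set.Ici (1 : ℝ), ⨅ x₂ ∈ Set.Ici (1 : ℝ), QuadrantInf.objective a b c d x₁ x₂
    = QuadrantInf.candidate a b c d
  refine le_antisymm (QuadrantInf.iInf_objective_le_candidate a b c d hdet) ?_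
  exact le_iInf₂ fun x₁ hx₁ => le_iInf₂ fun x₂ hx₂ =>
    QuadrantInf.candidate_le_objective ha hb hc hd hdet hx₁ hx₂
end

section
/- For $n=3$ and nonnegative coefficients $a_{ji}$ ($j=1,2$, $i=1,2,3$) with $a_{11}a_{22}-a_{12}a_{21}\neq 0$ and $a_{1i}^2+a_{2i}^2\neq 0$ for each $i$, the minimum over $x_3\in\mathbb{R}$ of $\Big|\frac{a_{22}x_1-a_{12}x_2+(a_{12}a_{23}-a_{13}a_{22})x_3}{a_{11}a_{22}-a_{12}a_{21}}\Big|+\Big|\frac{-a_{21}x_1+a_{11}x_2+(a_{21}a_{13}-a_{23}a_{11})x_3}{a_{11}a_{22}-a_{12}a_{21}}\Big|+|x_3|$ equals $\min_{i\neq j,\ i,j\in\{1,2,3\}}\frac{|a_{2i}x_1-a_{1i}x_2|+|a_{2j}x_1-a_{1j}x_2|}{|a_{2i}a_{1j}-a_{1i}a_{2j}|}$, where terms with $a_{2i}a_{1j}-a_{1i}a_{2j}=0$ are set to $+\infty$. -/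
/-!
After clearing the determinant, the objective is a sum `∑ j, |a j + b j * x₃|` of absolute values
of affine functions. Between two consecutive roots of the summands every summand keeps its sign, so
the sum is affine there; beyond the outermost roots it is monotone away from them. Hence its
infimum is attained at a root, and the three roots (`x₃ = 0` and the zeros of the two numerators)
give the three quotients, by Cramer's rule.
-/

open scoped ENNReal

lemma abs_add_eq_add_abs_of_mul_nonneg {p q : ℝ} (h : 0 ≤ p * q) : |p + q| = |p| + |q| := by
  refine (abs_add_eq_add_abs_iff p q).2 ?_
  rcases mul_nonneg_iff.1 h with h | h
  exacts [Or.inl h, Or.inr h]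

lemma abs_add_mul_le_abs_add_mul {a b u x : ℝ} (hux : u ≤ x) (h : 0 ≤ b * (a + b * u)) :
    |a + b * u| ≤ |a + b * x| := by
  have hsign : 0 ≤ (a + b * u) * (b * (x - u)) := by
    rw [show (a + b * u) * (b * (x - u)) = b * (a + b * u) * (x - u) by ring]
    exact mul_nonneg h (sub_nonneg.2 hux)
  calc |a + b * u| ≤ |a + b * u| + |b * (x - u)| := le_add_of_nonneg_right (abs_nonneg _)
    _ = |a + b * x| := by
      rw [← abs_add_eq_add_abs_of_mul_nonneg hsign]; congr 1; ring

lemma abs_add_mul_interpolate {a b u v x : ℝ} (hux : u ≤ x) (hxv : x ≤ v)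
    (h : 0 ≤ (a + b * u) * (a + b * v)) :
    (v - u) * |a + b * x| = (v - x) * |a + b * u| + (x - u) * |a + b * v| := by
  have hvx : 0 ≤ v - x := sub_nonneg.2 hxv
  have hxu : 0 ≤ x - u := sub_nonneg.2 hux
  have hsign : 0 ≤ (v - x) * (a + b * u) * ((x - u) * (a + b * v)) := by
    rw [show (v - x) * (a + b * u) * ((x - u) * (a + b * v))
      = (v - x) * (x - u) * ((a + b * u) * (a + b * v)) by ring]
    exact mul_nonneg (mul_nonneg hvx hxu) h
  calc (v - u) * |a + b * x| = |(v - x) * (a + b * u) + (x - u) * (a + b * v)| := by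
        rw [← abs_of_nonneg (by linarith : 0 ≤ v - u), ← abs_mul]; ring_nf
    _ = (v - x) * |a + b * u| + (x - u) * |a + b * v| := by
        rw [abs_add_eq_add_abs_of_mul_nonneg hsign, abs_mul, abs_mul, abs_of_nonneg hvx,
          abs_of_nonneg hxu]

lemma add_mul_eq_mul_sub_root {a b : ℝ} (hb : b ≠ 0) (t : ℝ) :
    a + b * t = b * (t - -a / b) := by
  field_simp; ring

lemma iInf_fin_three {α : Type*} [CompleteLinearOrder α] (f : Fin 3 → α) :
    ⨅ i, f i = min (min (f 0) (f 1)) (f 2) := by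
  rw [← Finset.inf_univ_eq_iInf]
  simp [Fin.univ_succ, inf_assoc]

def sumAbsAffine {ι : Type*} [Fintype ι] (a b : ι → ℝ) (t : ℝ) : ℝ :=
  ∑ j, |a j + b j * t|

namespace sumAbsAffine

variable {ι : Type*} [Fintype ι] (a b : ι → ℝ)

lemma neg_neg_apply (t : ℝ) : sumAbsAffine a (-b) (-t) = sumAbsAffine a b t := by
  simp only [sumAbsAffine, Pi.neg_apply, neg_mul_neg]

lemma min_le_of_mem_Icc {u v x : ℝ} (hux : u ≤ x) (hxv : x ≤ v)
    (h : ∀ j, 0 ≤ (a j + b j * u) * (a j + b j * v)) :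
    min (sumAbsAffine a b u) (sumAbsAffine a b v) ≤ sumAbsAffine a b x := by
  have hinterp : (v - u) * sumAbsAffine a b x
      = (v - x) * sumAbsAffine a b u + (x - u) * sumAbsAffine a b v := by
    simp only [sumAbsAffine, Finset.mul_sum, ← Finset.sum_add_distrib]
    exact Finset.sum_congr rfl fun j _ => abs_add_mul_interpolate hux hxv (h j)
  rcases (hux.trans hxv).eq_or_lt with rfl | huv
  · rw [le_antisymm hxv hux]; exact min_le_left _ _
  refine le_of_mul_le_mul_left ?_ (sub_pos.2 huv)
  calc (v - u) * min (sumAbsAffine a b u) (sumAbsAffine a b v)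
      = (v - x) * min (sumAbsAffine a b u) (sumAbsAffine a b v)
        + (x - u) * min (sumAbsAffine a b u) (sumAbsAffine a b v) := by ring
    _ ≤ (v - x) * sumAbsAffine a b u + (x - u) * sumAbsAffine a b v := by
        gcongr
        exacts [min_le_left _ _, min_le_right _ _]
    _ = (v - u) * sumAbsAffine a b x := hinterp.symm

lemma le_of_le_of_forall_mul_nonneg {u x : ℝ} (hux : u ≤ x)
    (h : ∀ j, 0 ≤ b j * (a j + b j * u)) :
    sumAbsAffine a b u ≤ sumAbsAffine a b x :=
  Finset.sum_le_sum fun j _ => abs_add_mul_le_abs_add_mul hux (h j)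

lemma exists_root_le_of_root_le {x : ℝ} (h : ∃ i, b i ≠ 0 ∧ -a i / b i ≤ x) :
    ∃ i, b i ≠ 0 ∧ sumAbsAffine a b (-a i / b i) ≤ sumAbsAffine a b x := by
  classical
  obtain ⟨i, hi, hmax⟩ := (Finset.univ.filter fun j => b j ≠ 0 ∧ -a j / b j ≤ x).exists_max_image
    (fun j => -a j / b j) (let ⟨j, hj⟩ := h; ⟨j, by simpa using hj⟩)
  simp only [Finset.mem_filter, Finset.mem_univ, true_and] at hi hmax
  set u := -a i / b i
  -- `u` is the largest root left of `x`; no summand changes sign between `u` and the next root.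
  by_cases hright : ∃ j, b j ≠ 0 ∧ x ≤ -a j / b j
  · obtain ⟨j, hj, hmin⟩ := (Finset.univ.filter fun j => b j ≠ 0 ∧ x ≤ -a j / b j).exists_min_image
      (fun j => -a j / b j) (let ⟨j, hj⟩ := hright; ⟨j, by simpa using hj⟩)
    simp only [Finset.mem_filter, Finset.mem_univ, true_and] at hj hmin
    set v := -a j / b j
    have hsign : ∀ l, 0 ≤ (a l + b l * u) * (a l + b l * v) := by
      intro l
      by_cases hl : b l = 0
      · simp only [hl, zero_mul, add_zero]; exact mul_self_nonneg _
      rw [add_mul_eq_mul_sub_root hl, add_mul_eq_mul_sub_root hl,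
        show ∀ p q : ℝ, b l * p * (b l * q) = b l ^ 2 * (p * q) by intros; ring]
      refine mul_nonneg (sq_nonneg _) ?_
      rcases le_total (-a l / b l) x with hlx | hxl
      · have := hmax l ⟨hl, hlx⟩
        exact mul_nonneg (by linarith) (by linarith)
      · have := hmin l ⟨hl, hxl⟩
        exact mul_nonneg_of_nonpos_of_nonpos (by linarith) (by linarith)
    rcases min_le_iff.1 (min_le_of_mem_Icc a b hi.2 hj.2 hsign) with h | h
    exacts [⟨i, hi.1, h⟩, ⟨j, hj.1, h⟩]
  · push Not at hright
    refine ⟨i, hi.1, le_of_le_of_forall_mul_nonneg a b hi.2 fun l => ?_⟩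
    by_cases hl : b l = 0
    · simp [hl]
    rw [add_mul_eq_mul_sub_root hl, ← mul_assoc, ← sq]
    have := hmax l ⟨hl, (hright l hl).le⟩
    exact mul_nonneg (sq_nonneg _) (by linarith)

theorem exists_root_le (h : ∃ i, b i ≠ 0) (x : ℝ) :
    ∃ i, b i ≠ 0 ∧ sumAbsAffine a b (-a i / b i) ≤ sumAbsAffine a b x := by
  by_cases hleft : ∃ i, b i ≠ 0 ∧ -a i / b i ≤ x
  · exact exists_root_le_of_root_le a b hleft
  push Not at hleft
  -- Otherwise reflect `t ↦ -t`, which turns the roots right of `x` into roots left of `-x`.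
  obtain ⟨i, hi⟩ := h
  obtain ⟨j, hj, hle⟩ := exists_root_le_of_root_le a (-b) (x := -x)
    ⟨i, neg_ne_zero.2 hi, by rw [Pi.neg_apply, div_neg, neg_le_neg_iff]; exact (hleft i hi).le⟩
  refine ⟨j, neg_ne_zero.1 hj, ?_⟩
  rwa [Pi.neg_apply, div_neg, neg_neg_apply, neg_neg_apply] at hle

theorem iInf_ofReal_eq (h : ∃ i, b i ≠ 0) :
    ⨅ x, ENNReal.ofReal (sumAbsAffine a b x)
      = ⨅ i, if b i = 0 then ∞ else ENNReal.ofReal (sumAbsAffine a b (-a i / b i)) := by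
  refine le_antisymm (le_iInf fun i => ?_) (le_iInf fun x => ?_)
  · split_ifs
    exacts [le_top, iInf_le _ _]
  · obtain ⟨i, hi, hle⟩ := exists_root_le a b h x
    exact iInf_le_of_le i (by rw [if_neg hi]; exact ENNReal.ofReal_le_ofReal hle)

end sumAbsAffine

theorem iInf_ofReal_abs_div_add_abs_div_add_abs {P Q R c d D : ℝ} (hD : D ≠ 0)
    (hR : Q * c - P * d = D * R) :
    ⨅ x, ENNReal.ofReal (|(P + c * x) / D| + |(Q + d * x) / D| + |x|)
      = min (min (ENNReal.ofReal ((|Q| + |P|) / |D|))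
          (if d = 0 then ∞ else ENNReal.ofReal ((|Q| + |R|) / |d|)))
          (if c = 0 then ∞ else ENNReal.ofReal ((|P| + |R|) / |c|)) := by
  set f : ℝ → ℝ := fun x ↦ |(P + c * x) / D| + |(Q + d * x) / D| + |x|
  have hf : f = sumAbsAffine ![0, Q / D, P / D] ![1, d / D, c / D] := by
    ext x
    simp only [f, sumAbsAffine, Fin.sum_univ_three, Matrix.cons_val, one_mul, zero_add]
    ring_nf
  have hf0 : f 0 = (|Q| + |P|) / |D| := by
    simp only [f, mul_zero, add_zero, abs_zero, abs_div]; ring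
  have hfd (hd : d ≠ 0) : f (-(Q / D) / (d / D)) = (|Q| + |R|) / |d| := by
    have hP : (P + c * (-(Q / D) / (d / D))) / D = -R / d := by
      field_simp; linear_combination -hR
    have hQ : (Q + d * (-(Q / D) / (d / D))) / D = 0 := by
      field_simp; ring
    have hx : -(Q / D) / (d / D) = -Q / d := by
      field_simp
    simp only [f]
    rw [hP, hQ, hx]
    simp only [abs_zero, abs_div, abs_neg]; ring
  have hfc (hc : c ≠ 0) : f (-(P / D) / (c / D)) = (|P| + |R|) / |c| := by
    have hP : (P + c * (-(P / D) / (c / D))) / D = 0 := by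
      field_simp; ring
    have hQ : (Q + d * (-(P / D) / (c / D))) / D = R / c := by
      field_simp; linear_combination hR
    have hx : -(P / D) / (c / D) = -P / c := by
      field_simp
    simp only [f]
    rw [hP, hQ, hx]
    simp only [abs_zero, abs_div, abs_neg]; ring
  show ⨅ x, ENNReal.ofReal (f x) = _
  rw [hf, sumAbsAffine.iInf_ofReal_eq _ _ ⟨0, one_ne_zero⟩, iInf_fin_three, ← hf]
  simp only [Matrix.cons_val_zero, Matrix.cons_val_one, Matrix.cons_val, one_ne_zero, if_false,
    neg_zero, div_one, div_eq_zero_iff, hD, or_false, hf0]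
  congr 1
  · congr 1
    split_ifs with hd
    exacts [rfl, by rw [hfd hd]]
  · split_ifs with hc
    exacts [rfl, by rw [hfc hc]]

theorem min_over_x3_piecewise_linear_general
    (a11 a12 a13 a21 a22 a23 x1 x2 : ℝ)
    (hdet : a11 * a22 - a12 * a21 ≠ 0) :
    (⨅ x3 : ℝ, ENNReal.ofReal
        (|(a22 * x1 - a12 * x2 + (a12 * a23 - a13 * a22) * x3) / (a11 * a22 - a12 * a21)| +
         |(-(a21 * x1) + a11 * x2 + (a21 * a13 - a23 * a11) * x3) / (a11 * a22 - a12 * a21)| +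
         |x3|))
      = min (min
          (if a21 * a12 - a11 * a22 = 0 then ⊤ else
            ENNReal.ofReal ((|a21 * x1 - a11 * x2| + |a22 * x1 - a12 * x2|) /
              |a21 * a12 - a11 * a22|))
          (if a21 * a13 - a11 * a23 = 0 then ⊤ else
            ENNReal.ofReal ((|a21 * x1 - a11 * x2| + |a23 * x1 - a13 * x2|) /
              |a21 * a13 - a11 * a23|)))
          (if a22 * a13 - a12 * a23 = 0 then ⊤ else
            ENNReal.ofReal ((|a22 * x1 - a12 * x2| + |a23 * x1 - a13 * x2|) /
              |a22 * a13 - a12 * a23|)) := by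
  rw [iInf_ofReal_abs_div_add_abs_div_add_abs hdet (R := a23 * x1 - a13 * x2) (by ring)]
  have e12 : a21 * a12 - a11 * a22 = -(a11 * a22 - a12 * a21) := by ring
  have e13 : a21 * a13 - a11 * a23 = a21 * a13 - a23 * a11 := by ring
  have e23 : a22 * a13 - a12 * a23 = -(a12 * a23 - a13 * a22) := by ring
  have eQ : a21 * x1 - a11 * x2 = -(-(a21 * x1) + a11 * x2) := by ring
  rw [e12, e13, e23, eQ]
  simp only [neg_eq_zero, abs_neg, if_neg hdet]

/-- the `n = 3` minimization: the minimum over `x₃ ∈ ℝ` of the stated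
piecewise-linear function equals the minimum over pairs `i ≠ j` of
`(|a_{2i}x₁ - a_{1i}x₂| + |a_{2j}x₁ - a_{1j}x₂|)/|a_{2i}a_{1j} - a_{1i}a_{2j}|`,
with terms having vanishing denominator set to `+∞`. -/
theorem min_over_x3_piecewise_linear
    (a11 a12 a13 a21 a22 a23 x1 x2 : ℝ)
    (h11 : 0 ≤ a11) (h12 : 0 ≤ a12) (h13 : 0 ≤ a13)
    (h21 : 0 ≤ a21) (h22 : 0 ≤ a22) (h23 : 0 ≤ a23)
    (hdet : a11 * a22 - a12 * a21 ≠ 0)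
    (hnz1 : a11 ^ 2 + a21 ^ 2 ≠ 0) (hnz2 : a12 ^ 2 + a22 ^ 2 ≠ 0)
    (hnz3 : a13 ^ 2 + a23 ^ 2 ≠ 0) :
    (⨅ x3 : ℝ, ENNReal.ofReal
        (|(a22 * x1 - a12 * x2 + (a12 * a23 - a13 * a22) * x3) / (a11 * a22 - a12 * a21)| +
         |(-(a21 * x1) + a11 * x2 + (a21 * a13 - a23 * a11) * x3) / (a11 * a22 - a12 * a21)| +
         |x3|))
      = min (min
          (if a21 * a12 - a11 * a22 = 0 then ⊤ else
            ENNReal.ofReal ((|a21 * x1 - a11 * x2| + |a22 * x1 - a12 * x2|) /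
              |a21 * a12 - a11 * a22|))
          (if a21 * a13 - a11 * a23 = 0 then ⊤ else
            ENNReal.ofReal ((|a21 * x1 - a11 * x2| + |a23 * x1 - a13 * x2|) /
              |a21 * a13 - a11 * a23|)))
          (if a22 * a13 - a12 * a23 = 0 then ⊤ else
            ENNReal.ofReal ((|a22 * x1 - a12 * x2| + |a23 * x1 - a13 * x2|) /
              |a22 * a13 - a12 * a23|)) :=
  min_over_x3_piecewise_linear_general a11 a12 a13 a21 a22 a23 x1 x2 hdet
end

section
/- Let $Y_1,Y_2$ be independent with common absolutely continuous distribution whose survival function is in $\mathscr{L}_\beta$ for some $\beta>0$, and let $X_1=Y_1+a_{12}Y_2$, $X_2=a_{21}Y_1+Y_2$ with $0\leq a_{12},a_{21}\leq 1$. Then the residual tail dependence coefficient of $(X_1,X_2)$ is $\eta=\frac{1-a_{12}a_{21}}{2-a_{12}-a_{21}}$; in particular, if $a_{12}<1$ and $a_{21}<1$ then $\eta<1$ and $(X_1,X_2)$ is asymptotically independent. -/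
open scoped ENNReal

/-- For `X₁ = Y₁ + a₁₂Y₂`, `X₂ = a₂₁Y₁ + Y₂` with `0 ≤ a₁₂, a₂₁ ≤ 1`
(not both equal to 1), the residual tail dependence coefficient, given by the general
formula `η⁻¹ = min over pairs of min{(|ã₂ᵢ-ã₁ᵢ|+|ã₂ⱼ-ã₁ⱼ|)/|ã₂ᵢã₁ⱼ-ã₁ᵢã₂ⱼ|,
max(1/ã₁ᵢ,1/ã₂ᵢ), max(1/ã₁ⱼ,1/ã₂ⱼ)}` (with `1/0 = ∞` and vanishing-denominator terms
set to `∞`), equals `(1 - a₁₂a₂₁)/(2 - a₁₂ - a₂₁)`; in particular if `a₁₂ < 1` and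
`a₂₁ < 1` then `η < 1` (asymptotic independence). -/
theorem eta_two_variable_linear_model
    (a12 a21 : ℝ) (h12 : 0 ≤ a12 ∧ a12 ≤ 1) (h21 : 0 ≤ a21 ∧ a21 ≤ 1)
    (hne : a12 ≠ 1 ∨ a21 ≠ 1) :
    (min (min
        (if a21 * a12 - 1 * 1 = 0 then (⊤ : ℝ≥0∞) else
          ENNReal.ofReal ((|a21 - 1| + |1 - a12|) / |a21 * a12 - 1 * 1|))
        (max (ENNReal.ofReal 1)⁻¹ (ENNReal.ofReal a21)⁻¹))
        (max (ENNReal.ofReal a12)⁻¹ (ENNReal.ofReal 1)⁻¹))⁻¹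
      = ENNReal.ofReal ((1 - a12 * a21) / (2 - a12 - a21)) ∧
    (a12 < 1 → a21 < 1 →
      (min (min
        (if a21 * a12 - 1 * 1 = 0 then (⊤ : ℝ≥0∞) else
          ENNReal.ofReal ((|a21 - 1| + |1 - a12|) / |a21 * a12 - 1 * 1|))
        (max (ENNReal.ofReal 1)⁻¹ (ENNReal.ofReal a21)⁻¹))
        (max (ENNReal.ofReal a12)⁻¹ (ENNReal.ofReal 1)⁻¹))⁻¹ < 1) := by
  obtain ⟨ha0, ha1⟩ := h12
  obtain ⟨hb0, hb1⟩ := h21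
  have hab : a21 * a12 < 1 := by
    rcases hne with h | h
    · have : a12 < 1 := lt_of_le_of_ne ha1 h
      nlinarith
    · have : a21 < 1 := lt_of_le_of_ne hb1 h
      nlinarith
  have hd : 0 < 1 - a21 * a12 := by linarith
  have hsum : 0 < (1 - a21) + (1 - a12) := by
    rcases hne with h | h
    · have : a12 < 1 := lt_of_le_of_ne ha1 h; linarith
    · have : a21 < 1 := lt_of_le_of_ne hb1 h; linarith
  have hif : ¬ (a21 * a12 - 1 * 1 = 0) := by intro h; linarith
  have habs : (|a21 - 1| + |1 - a12|) / |a21 * a12 - 1 * 1| =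
      ((1 - a21) + (1 - a12)) / (1 - a21 * a12) := by
    rw [abs_of_nonpos (by linarith), abs_of_nonneg (by linarith),
      abs_of_nonpos (by linarith)]
    ring_nf
  set r : ℝ := ((1 - a21) + (1 - a12)) / (1 - a21 * a12) with hr
  have hrpos : 0 < r := div_pos hsum hd
  have key : ∀ c : ℝ, 0 ≤ c → c ≤ 1 → r * c ≤ 1 → ENNReal.ofReal r ≤ (ENNReal.ofReal c)⁻¹ := by
    intro c hc0 hc1 hrc
    rw [ENNReal.le_inv_iff_mul_le, ← ENNReal.ofReal_mul hrpos.le]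
    exact ENNReal.ofReal_le_one.mpr hrc
  have hle21 : ENNReal.ofReal r ≤ (ENNReal.ofReal a21)⁻¹ := by
    refine key a21 hb0 hb1 ?_
    rw [hr, div_mul_eq_mul_div, div_le_one hd]
    nlinarith [sq_nonneg (1 - a21)]
  have hle12 : ENNReal.ofReal r ≤ (ENNReal.ofReal a12)⁻¹ := by
    refine key a12 ha0 ha1 ?_
    rw [hr, div_mul_eq_mul_div, div_le_one hd]
    nlinarith [sq_nonneg (1 - a12)]
  have hmin : (min (min
        (if a21 * a12 - 1 * 1 = 0 then (⊤ : ℝ≥0∞) else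
          ENNReal.ofReal ((|a21 - 1| + |1 - a12|) / |a21 * a12 - 1 * 1|))
        (max (ENNReal.ofReal 1)⁻¹ (ENNReal.ofReal a21)⁻¹))
        (max (ENNReal.ofReal a12)⁻¹ (ENNReal.ofReal 1)⁻¹)) = ENNReal.ofReal r := by
    rw [if_neg hif, habs, min_eq_left (le_max_of_le_right hle21),
      min_eq_left (le_max_of_le_left hle12)]
  have heq : (ENNReal.ofReal r)⁻¹ = ENNReal.ofReal ((1 - a12 * a21) / (2 - a12 - a21)) := by
    rw [← ENNReal.ofReal_inv_of_pos hrpos, hr, inv_div]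
    congr 1 <;> ring
  refine ⟨by rw [hmin, heq], fun h1 h2 => ?_⟩
  rw [hmin, heq]
  refine ENNReal.ofReal_lt_one.mpr ?_
  rw [div_lt_one (by linarith)]
  nlinarith
end

section
/- Let $X$ be a nonnegative random variable with regularly varying survival function $\bar{F}_X\in\mathrm{RV}_{-\rho}$, $\rho>0$, and let $\epsilon_1,\epsilon_2$ be independent standard normal random variables, independent of $X$. For each $n\geq 1$ set $X_{1,n}=X/n+\epsilon_1$ and $X_{2,n}=X/n+\epsilon_2$. Then $(X_{1,n},X_{2,n})\to(\epsilon_1,\epsilon_2)$ almost surely as $n\to\infty$, yet for every fixed $n$ the tail dependence coefficient of $(X_{1,n},X_{2,n})$ equals $1$, while the tail dependence coefficient of $(\epsilon_1,\epsilon_2)$ equals $0$. Hence almost sure convergence does not imply convergence of tail dependence coefficients. -/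
/-!
For fixed `n`, the common factor `Y = X / n` has a regularly varying tail, whereas the Gaussian
noise has an exponential moment, so its tail is negligible against every power. An exceedance
of a high level by `Y + ε₂` is therefore caused by `Y`, and then `Y + ε₁` exceeds it as well:
`P(Y + ε₁ > u, Y + ε₂ > u) / P(Y + ε₂ > u) → 1`. The marginals `Y + εᵢ` share a continuous,
strictly increasing distribution function `F`, so at level `q = F u` the copula ratio defining
`χ` equals this tail ratio, whence `χ = 1`. For the independent limit the tail ratio is
`P(ε₁ > u) → 0`, so `χ = 0`.
-/

open Filter Topology MeasureTheory ProbabilityTheory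
open scoped NNReal

def IsRegularlyVarying (f : ℝ → ℝ) (α : ℝ) : Prop :=
  ∀ t : ℝ, 0 < t → Tendsto (fun x => f (t * x) / f x) atTop (𝓝 (t ^ α))

theorem exists_pos_le_pow_mul_of_le_two_pow_mul {f : ℝ → ℝ} (hanti : Antitone f) {m : ℕ}
    (hpos : ∀ᶠ x in atTop, 0 < f x) (hdouble : ∀ᶠ x in atTop, f x ≤ 2 ^ m * f (2 * x)) :
    ∃ c > 0, ∀ᶠ x in atTop, c ≤ x ^ m * f x := by
  obtain ⟨N, hN⟩ := eventually_atTop.1 (hpos.and hdouble)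
  set x₀ := max N 1
  have hx₀ : 0 < x₀ := lt_of_lt_of_le one_pos (le_max_right N 1)
  have hgrow : ∀ k : ℕ, f x₀ ≤ (2 ^ k) ^ m * f (2 ^ k * x₀) := by
    intro k
    induction k with
    | zero => simp
    | succ k ih =>
      have hk : N ≤ 2 ^ k * x₀ :=
        (le_max_left N 1).trans (le_mul_of_one_le_left hx₀.le (one_le_pow₀ one_le_two))
      calc f x₀ ≤ (2 ^ k) ^ m * f (2 ^ k * x₀) := ih
        _ ≤ (2 ^ k) ^ m * (2 ^ m * f (2 * (2 ^ k * x₀))) := by gcongr; exact (hN _ hk).2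
        _ = (2 ^ (k + 1)) ^ m * f (2 ^ (k + 1) * x₀) := by ring_nf
  refine ⟨f x₀ * (x₀ / 2) ^ m, mul_pos (hN x₀ (le_max_left N 1)).1 (by positivity), ?_⟩
  filter_upwards [eventually_ge_atTop x₀] with x hx
  obtain ⟨k, hk, hk'⟩ := exists_nat_pow_near ((one_le_div hx₀).2 hx) one_lt_two
  rw [div_lt_iff₀ hx₀] at hk'
  rw [le_div_iff₀ hx₀] at hk
  have hfx : 0 ≤ f (2 ^ (k + 1) * x₀) :=
    (hN _ ((le_max_left N 1).trans (hx.trans hk'.le))).1.le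
  calc f x₀ * (x₀ / 2) ^ m ≤ (2 ^ (k + 1)) ^ m * f (2 ^ (k + 1) * x₀) * (x₀ / 2) ^ m := by
        gcongr; exact hgrow (k + 1)
    _ = (2 ^ k * x₀) ^ m * f (2 ^ (k + 1) * x₀) := by
        rw [div_pow, pow_succ, mul_pow, mul_pow]; field_simp
    _ ≤ x ^ m * f x := mul_le_mul (pow_le_pow_left₀ (by positivity) hk m) (hanti hk'.le) hfx
        (pow_nonneg (hx₀.le.trans hx) m)

namespace IsRegularlyVarying

variable {f : ℝ → ℝ} {α : ℝ}

theorem eventually_ne_zero (hf : IsRegularlyVarying f α) : ∀ᶠ x in atTop, f x ≠ 0 := by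
  have h := hf 1 one_pos
  simp only [one_mul, Real.one_rpow] at h
  filter_upwards [h.eventually_ne one_ne_zero] with x hx hfx
  simp [hfx] at hx

theorem comp_mul_left (hf : IsRegularlyVarying f α) {c : ℝ} (hc : 0 < c) :
    IsRegularlyVarying (fun x => f (c * x)) α := fun t ht =>
  ((hf t ht).comp (tendsto_id.const_mul_atTop hc)).congr fun x => by
    simp only [Function.comp_apply, id, mul_left_comm t c]

theorem eventually_abs_sub_le (hf : IsRegularlyVarying f α) {ε : ℝ} (hε : 0 < ε) :
    ∀ᶠ t in 𝓝 1, ∀ᶠ x in atTop, |f (t * x) - f x| ≤ ε * |f x| := by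
  have hcont : Tendsto (fun t : ℝ => t ^ α) (𝓝 1) (𝓝 1) := by
    simpa using (Real.continuousAt_rpow_const 1 α (Or.inl one_ne_zero)).tendsto
  filter_upwards [hcont.eventually (Metric.ball_mem_nhds 1 (half_pos hε)),
    eventually_gt_nhds one_pos] with t ht ht0
  filter_upwards [(hf t ht0).eventually (Metric.ball_mem_nhds _ (half_pos hε)),
    hf.eventually_ne_zero] with x hx hfx
  have hdist : |f (t * x) / f x - 1| < ε := by
    rw [Real.dist_eq] at ht hx
    calc |f (t * x) / f x - 1| ≤ |f (t * x) / f x - t ^ α| + |t ^ α - 1| := abs_sub_le _ _ _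
      _ < ε := by linarith
  calc |f (t * x) - f x| = |f (t * x) / f x - 1| * |f x| := by
        rw [← abs_mul, sub_mul, div_mul_cancel₀ _ hfx, one_mul]
    _ ≤ ε * |f x| := by gcongr

theorem exists_pos_le_pow_mul (hf : IsRegularlyVarying f α) (hanti : Antitone f)
    (hnn : ∀ x, 0 ≤ f x) : ∃ m : ℕ, ∃ c > 0, ∀ᶠ x in atTop, c ≤ x ^ m * f x := by
  set m := ⌈-α⌉₊ + 1
  have hm : (2 ^ m : ℝ)⁻¹ < 2 ^ α := by
    rw [← Real.rpow_natCast, ← Real.rpow_neg zero_le_two,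
      Real.rpow_lt_rpow_left_iff one_lt_two]
    have := Nat.le_ceil (-α)
    push_cast [m]
    linarith
  have hpos : ∀ᶠ x in atTop, 0 < f x :=
    hf.eventually_ne_zero.mono fun x hx => (hnn x).lt_of_ne' hx
  refine ⟨m, exists_pos_le_pow_mul_of_le_two_pow_mul hanti hpos ?_⟩
  filter_upwards [(hf 2 two_pos).eventually (eventually_gt_nhds hm), hpos] with x hx hfx
  rw [lt_div_iff₀ hfx, inv_mul_eq_div, div_lt_iff₀ (by positivity)] at hx
  linarith

theorem tendsto_div_of_tendsto_pow_mul (hf : IsRegularlyVarying f α) (hanti : Antitone f)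
    (hnn : ∀ x, 0 ≤ f x) {g : ℝ → ℝ} (hg : ∀ m : ℕ, Tendsto (fun x => x ^ m * g x) atTop (𝓝 0)) :
    Tendsto (fun x => g x / f x) atTop (𝓝 0) := by
  obtain ⟨m, c, hc, hlow⟩ := hf.exists_pos_le_pow_mul hanti hnn
  have hbound := (hg m).norm.div_const c
  rw [norm_zero, zero_div] at hbound
  refine squeeze_zero_norm' ?_ hbound
  filter_upwards [hlow, eventually_gt_atTop 0] with x hx hx0
  have hxm : 0 < x ^ m := pow_pos hx0 m
  calc ‖g x / f x‖ = ‖x ^ m * g x‖ / (x ^ m * f x) := by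
        rw [← mul_div_mul_left (g x) (f x) hxm.ne', norm_div, Real.norm_of_nonneg (hc.le.trans hx)]
    _ ≤ ‖x ^ m * g x‖ / c := div_le_div_of_nonneg_left (norm_nonneg _) hc hx

end IsRegularlyVarying

theorem tendsto_div_nhds_one_of_bounds {ι : Type*} {l : Filter ι} {f g h : ι → ℝ}
    (hfg : ∀ᶠ x in l, f x ≤ g x) (hh : ∀ᶠ x in l, 0 < h x)
    (hlow : ∀ ε, 0 < ε → ε < 1 → ∀ᶠ x in l, (1 - ε) * h x ≤ f x)
    (hup : ∀ ε > 0, ∀ᶠ x in l, g x ≤ (1 + ε) * h x) :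
    Tendsto (fun x => f x / g x) l (𝓝 1) := by
  rw [tendsto_order]
  constructor
  · intro a ha
    set ε := min ((1 - a) / 4) (1 / 2)
    have hε : 0 < ε := lt_min (by linarith) one_half_pos
    have hε₁ : ε ≤ (1 - a) / 4 := min_le_left _ _
    have hε₂ : ε ≤ 1 / 2 := min_le_right _ _
    filter_upwards [hfg, hh, hlow ε hε (by linarith), hup ε hε] with x hfgx hhx hlowx hupx
    have hf : 0 < f x := lt_of_lt_of_le (mul_pos (by linarith) hhx) hlowx
    rw [lt_div_iff₀ (hf.trans_le hfgx)]
    nlinarith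
  · intro b hb
    filter_upwards [hfg, hh, hlow (1 / 2) one_half_pos one_half_lt_one] with x hfgx hhx hlowx
    have hg : 0 < g x := lt_of_lt_of_le (mul_pos (by norm_num) hhx) (hlowx.trans hfgx)
    exact ((div_le_one hg).2 hfgx).trans_lt hb

noncomputable def survivalFun {Ω : Type*} [MeasurableSpace Ω] (μ : Measure Ω) (X : Ω → ℝ)
    (u : ℝ) : ℝ :=
  μ.real {ω | u < X ω}

section DistributionFunctions

variable {Ω : Type*} [MeasurableSpace Ω] {μ : Measure Ω} [IsProbabilityMeasure μ] {X : Ω → ℝ}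

theorem antitone_survivalFun : Antitone (survivalFun μ X) := fun _ _ huv =>
  measureReal_mono fun _ hω => lt_of_le_of_lt huv hω

theorem measureReal_le_eq_cdf_map (hX : Measurable X) (c : ℝ) :
    μ.real {ω | X ω ≤ c} = cdf (μ.map X) c := by
  have := Measure.isProbabilityMeasure_map (μ := μ) hX.aemeasurable
  rw [cdf_eq_real, map_measureReal_apply hX measurableSet_Iic]
  rfl

theorem survivalFun_eq_one_sub_cdf (hX : Measurable X) (u : ℝ) :
    survivalFun μ X u = 1 - cdf (μ.map X) u := by
  rw [← measureReal_le_eq_cdf_map hX,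
    ← probReal_compl_eq_one_sub (measurableSet_le hX measurable_const)]
  simp only [survivalFun, Set.compl_ofPred, not_le]

theorem tendsto_survivalFun_atTop (hX : Measurable X) :
    Tendsto (survivalFun μ X) atTop (𝓝 0) := by
  have h := (tendsto_cdf_atTop (μ.map X)).const_sub 1
  rwa [sub_self, ← funext (survivalFun_eq_one_sub_cdf hX)] at h

theorem tendsto_survivalFun_atBot (hX : Measurable X) :
    Tendsto (survivalFun μ X) atBot (𝓝 1) := by
  have h := (tendsto_cdf_atBot (μ.map X)).const_sub 1
  rwa [sub_zero, ← funext (survivalFun_eq_one_sub_cdf hX)] at h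

end DistributionFunctions

section CDF

variable {ν : Measure ℝ} [IsProbabilityMeasure ν]

theorem continuous_cdf_of_absolutelyContinuous (h : ν ≪ volume) : Continuous (cdf ν) := by
  refine continuous_iff_continuousAt.2 fun x => ?_
  rw [(cdf ν).mono.continuousAt_iff_leftLim_eq_rightLim, (cdf ν).rightLim_eq]
  have hatom : (cdf ν).measure {x} = 0 := by rw [measure_cdf]; exact h (Real.volume_singleton)
  rw [StieltjesFunction.measure_singleton, ENNReal.ofReal_eq_zero, sub_nonpos] at hatom
  exact le_antisymm ((cdf ν).mono.leftLim_le le_rfl) hatom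

theorem strictMono_cdf_of_absolutelyContinuous (h : volume ≪ ν) : StrictMono (cdf ν) := by
  intro a b hab
  by_contra hle
  have hnull : ν (Set.Ioc a b) = 0 := by
    rw [← measure_cdf ν, StieltjesFunction.measure_Ioc, ENNReal.ofReal_eq_zero, sub_nonpos]
    exact not_lt.1 hle
  have hvol : volume (Set.Ioc a b) = 0 := h hnull
  rw [Real.volume_Ioc] at hvol
  exact (ENNReal.ofReal_pos.2 (sub_pos.2 hab)).ne' hvol

end CDF

theorem MeasureTheory.Measure.absolutelyContinuous_conv {M : Type*} [AddMonoid M]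
    [MeasurableSpace M] [MeasurableAdd₂ M] {ν κ ρ : Measure M} [ρ.IsAddLeftInvariant] [SFinite κ]
    [NeZero ν]
    (h : ρ ≪ κ) : ρ ≪ ν ∗ κ := by
  refine AbsolutelyContinuous.mk fun s hs h0 => ?_
  have hslice : ∀ x, ∫⁻ y, s.indicator 1 (x + y) ∂κ = κ ((x + ·) ⁻¹' s) := fun x => by
    rw [← lintegral_indicator_one (hs.preimage (measurable_const_add x))]
    rfl
  rw [← lintegral_indicator_one hs, Measure.lintegral_conv (measurable_one.indicator hs)] at h0
  simp_rw [hslice] at h0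
  have hmeas : Measurable fun x => κ ((x + ·) ⁻¹' s) :=
    measurable_measure_prodMk_left (hs.preimage measurable_add)
  rw [lintegral_eq_zero_iff hmeas] at h0
  have : (ae ν).NeBot := ae_neBot.2 (NeZero.ne ν)
  obtain ⟨x, hx⟩ := h0.exists
  rw [← IsAddLeftInvariant.map_add_left_eq_self (μ := ρ) x,
    Measure.map_apply (measurable_const_add x) hs]
  exact h hx

noncomputable def upperTailRatio {Ω : Type*} [MeasurableSpace Ω] (μ : Measure Ω)
    (W₁ W₂ : Ω → ℝ) (u : ℝ) : ℝ :=
  μ.real {ω | u < W₁ ω ∧ u < W₂ ω} / survivalFun μ W₂ u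

/-- `μ.real {ω' | W ω' ≤ W ω}` is `F_W (W ω)`, so the limit of this ratio as `q ↑ 1` is `χ`. -/
noncomputable def tailDependenceRatio {Ω : Type*} [MeasurableSpace Ω] (μ : Measure Ω)
    (W₁ W₂ : Ω → ℝ) (q : ℝ) : ℝ :=
  μ.real {ω | q < μ.real {ω' | W₁ ω' ≤ W₁ ω} ∧ q < μ.real {ω' | W₂ ω' ≤ W₂ ω}} /
    μ.real {ω | q < μ.real {ω' | W₂ ω' ≤ W₂ ω}}

theorem nhdsLT_le_map_atTop {F : ℝ → ℝ} {c : ℝ} (hF : Continuous F) (hlt : ∀ x, F x < c)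
    (hlim : Tendsto F atTop (𝓝 c)) : 𝓝[<] c ≤ map F atTop := by
  intro s hs
  obtain ⟨N, hN⟩ := mem_atTop_sets.1 (mem_map.1 hs)
  filter_upwards [Ioo_mem_nhdsLT (hlt N)] with y hy
  obtain ⟨M, hMy, hNM⟩ := ((hlim.eventually (eventually_gt_nhds hy.2)).and
    (eventually_ge_atTop N)).exists
  obtain ⟨x, hx, rfl⟩ := intermediate_value_Icc hNM hF.continuousOn ⟨hy.1.le, hMy.le⟩
  exact hN x hx.1

theorem tendsto_tailDependenceRatio {Ω : Type*} [MeasurableSpace Ω] {μ : Measure Ω}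
    [IsProbabilityMeasure μ] {W₁ W₂ : Ω → ℝ} (hW₁ : Measurable W₁) (hW₂ : Measurable W₂)
    (hlaw : μ.map W₁ = μ.map W₂) (hcont : Continuous (cdf (μ.map W₂)))
    (hmono : StrictMono (cdf (μ.map W₂))) {L : ℝ}
    (hR : Tendsto (upperTailRatio μ W₁ W₂) atTop (𝓝 L)) :
    Tendsto (tailDependenceRatio μ W₁ W₂) (𝓝[<] 1) (𝓝 L) := by
  have hF₁ : ∀ c, μ.real {ω | W₁ ω ≤ c} = cdf (μ.map W₂) c := fun c => by
    rw [measureReal_le_eq_cdf_map hW₁, hlaw]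
  have hF₂ := measureReal_le_eq_cdf_map (μ := μ) hW₂
  have hlt : ∀ x, cdf (μ.map W₂) x < 1 := fun x =>
    (hmono (lt_add_one x)).trans_le (cdf_le_one _ _)
  have hcomp : tailDependenceRatio μ W₁ W₂ ∘ cdf (μ.map W₂) = upperTailRatio μ W₁ W₂ := by
    funext u
    simp only [Function.comp_apply, tailDependenceRatio, upperTailRatio, survivalFun, hF₁, hF₂,
      hmono.lt_iff_lt]
  exact (tendsto_map'_iff.2 (hcomp ▸ hR)).mono_left
    (nhdsLT_le_map_atTop hcont hlt (tendsto_cdf_atTop _))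

section TailBounds

variable {Ω : Type*} [MeasurableSpace Ω] {μ : Measure Ω} [IsProbabilityMeasure μ]
  {Y e e₁ e₂ : Ω → ℝ}

theorem survivalFun_add_le (a b : ℝ) :
    survivalFun μ (Y + e) (a + b) ≤ survivalFun μ Y a + survivalFun μ e b := by
  refine (measureReal_mono fun ω hω => ?_).trans (measureReal_union_le _ _)
  by_contra h
  simp only [Set.mem_union, Set.mem_ofPred_eq, not_or, not_lt, Pi.add_apply] at h hω
  linarith [h.1, h.2]

theorem survivalFun_mul_le_measureReal_lt_and_lt (hind : IndepFun Y (fun ω => (e₁ ω, e₂ ω)) μ)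
    (a b : ℝ) :
    survivalFun μ Y a * μ.real {ω | b < e₁ ω ∧ b < e₂ ω} ≤
      μ.real {ω | a + b < Y ω + e₁ ω ∧ a + b < Y ω + e₂ ω} := by
  have hprod := hind.measure_inter_preimage_eq_mul _ _ (measurableSet_Ioi (a := a))
    ((measurableSet_Ioi (a := b)).prod (measurableSet_Ioi (a := b)))
  have hsub : Y ⁻¹' Set.Ioi a ∩ (fun ω => (e₁ ω, e₂ ω)) ⁻¹' Set.Ioi b ×ˢ Set.Ioi b ⊆
      {ω | a + b < Y ω + e₁ ω ∧ a + b < Y ω + e₂ ω} := by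
    rintro ω ⟨hYω, he₁ω, he₂ω⟩
    simp only [Set.mem_preimage, Set.mem_Ioi] at hYω he₁ω he₂ω
    exact ⟨by linarith, by linarith⟩
  calc survivalFun μ Y a * μ.real {ω | b < e₁ ω ∧ b < e₂ ω}
      = μ.real (Y ⁻¹' Set.Ioi a ∩ (fun ω => (e₁ ω, e₂ ω)) ⁻¹' Set.Ioi b ×ˢ Set.Ioi b) := by
        simp only [measureReal_def, hprod, ENNReal.toReal_mul]
        rfl
    _ ≤ _ := measureReal_mono hsub

theorem tendsto_measureReal_lt_and_lt_atBot (he₁ : Measurable e₁) (he₂ : Measurable e₂) :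
    Tendsto (fun b => μ.real {ω | b < e₁ ω ∧ b < e₂ ω}) atBot (𝓝 1) := by
  refine (tendsto_survivalFun_atBot (μ := μ) (he₁.min he₂)).congr fun b => ?_
  simp only [survivalFun, lt_min_iff]

theorem tendsto_pow_mul_survivalFun_const_mul
    (hexp : Integrable (fun ω => Real.exp (e ω)) μ) {c : ℝ} (hc : 0 < c) (m : ℕ) :
    Tendsto (fun x => x ^ m * survivalFun μ e (c * x)) atTop (𝓝 0) := by
  have hlim := (tendsto_rpow_mul_exp_neg_mul_atTop_nhds_zero m c hc).mul_const (mgf e μ 1)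
  simp only [Real.rpow_natCast, zero_mul] at hlim
  refine squeeze_zero' ?_ ?_ hlim
  · filter_upwards [eventually_ge_atTop 0] with x hx
    exact mul_nonneg (pow_nonneg hx m) measureReal_nonneg
  · filter_upwards [eventually_ge_atTop 0] with x hx
    have hchernoff := measure_ge_le_exp_mul_mgf (c * x) zero_le_one (by simpa using hexp)
    rw [mul_assoc]
    gcongr
    calc survivalFun μ e (c * x) ≤ μ.real {ω | c * x ≤ e ω} :=
          measureReal_mono fun ω (hω : c * x < e ω) => hω.le
      _ ≤ _ := hchernoff
      _ = _ := by ring_nf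

theorem eventually_one_sub_mul_survivalFun_le_measureReal_lt_add (he₁ : Measurable e₁)
    (he₂ : Measurable e₂) (hind : IndepFun Y (fun ω => (e₁ ω, e₂ ω)) μ) {α : ℝ}
    (hRV : IsRegularlyVarying (survivalFun μ Y) α) {ε : ℝ} (hε : 0 < ε) (hε₁ : ε < 1) :
    ∀ᶠ x in atTop, (1 - ε) * survivalFun μ Y x ≤
      μ.real {ω | x < Y ω + e₁ ω ∧ x < Y ω + e₂ ω} := by
  obtain ⟨t, hclose, ht⟩ := (((hRV.eventually_abs_sub_le (half_pos hε)).filter_mono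
    nhdsWithin_le_nhds).and (self_mem_nhdsWithin (s := Set.Ioi 1) (a := 1))).exists
  have hjoint := (tendsto_measureReal_lt_and_lt_atBot (μ := μ) he₁ he₂).comp
    (tendsto_id.const_mul_atTop_of_neg (sub_neg.2 ht))
  filter_upwards [hclose, hjoint.eventually (eventually_ge_nhds (by linarith : 1 - ε / 2 < 1))]
    with x hx hp
  simp only [Function.comp_apply, id] at hp
  have hbound := survivalFun_mul_le_measureReal_lt_and_lt hind (t * x) ((1 - t) * x)
  rw [show t * x + (1 - t) * x = x by ring] at hbound
  have hT : 0 ≤ survivalFun μ Y x := measureReal_nonneg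
  rw [abs_of_nonneg hT, abs_le] at hx
  refine le_trans ?_ hbound
  have hYt : (1 - ε / 2) * survivalFun μ Y x ≤ survivalFun μ Y (t * x) := by linarith [hx.1]
  nlinarith [mul_le_mul hYt hp (by linarith) measureReal_nonneg]

theorem eventually_survivalFun_add_le_one_add_mul {α : ℝ}
    (hRV : IsRegularlyVarying (survivalFun μ Y) α)
    (hexp : Integrable (fun ω => Real.exp (e ω)) μ) {ε : ℝ} (hε : 0 < ε) :
    ∀ᶠ x in atTop, survivalFun μ (Y + e) x ≤ (1 + ε) * survivalFun μ Y x := by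
  obtain ⟨t, hclose, ht⟩ := (((hRV.eventually_abs_sub_le (half_pos hε)).filter_mono
    nhdsWithin_le_nhds).and (Ioo_mem_nhdsLT (zero_lt_one' ℝ))).exists
  have hsmall := hRV.tendsto_div_of_tendsto_pow_mul antitone_survivalFun
    (fun _ => measureReal_nonneg) (tendsto_pow_mul_survivalFun_const_mul hexp (sub_pos.2 ht.2))
  filter_upwards [hclose, hsmall.eventually (eventually_le_nhds (half_pos hε)),
    hRV.eventually_ne_zero] with x hx hsx hTx
  have hT : 0 < survivalFun μ Y x := measureReal_nonneg.lt_of_ne' hTx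
  rw [abs_of_pos hT, abs_le] at hx
  rw [div_le_iff₀ hT] at hsx
  calc survivalFun μ (Y + e) x = survivalFun μ (Y + e) (t * x + (1 - t) * x) := by ring_nf
    _ ≤ survivalFun μ Y (t * x) + survivalFun μ e ((1 - t) * x) := survivalFun_add_le _ _
    _ ≤ (1 + ε) * survivalFun μ Y x := by linarith [hx.2]

theorem tendsto_upperTailRatio_add (he₁ : Measurable e₁) (he₂ : Measurable e₂)
    (hind : IndepFun Y (fun ω => (e₁ ω, e₂ ω)) μ) {α : ℝ}
    (hRV : IsRegularlyVarying (survivalFun μ Y) α)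
    (hexp : Integrable (fun ω => Real.exp (e₂ ω)) μ) :
    Tendsto (upperTailRatio μ (Y + e₁) (Y + e₂)) atTop (𝓝 1) :=
  tendsto_div_nhds_one_of_bounds (h := survivalFun μ Y)
    (Eventually.of_forall fun _ => measureReal_mono fun _ hω => hω.2)
    (hRV.eventually_ne_zero.mono fun _ hx => measureReal_nonneg.lt_of_ne' hx)
    (fun _ hε hε₁ =>
      eventually_one_sub_mul_survivalFun_le_measureReal_lt_add he₁ he₂ hind hRV hε hε₁)
    (fun _ hε => eventually_survivalFun_add_le_one_add_mul hRV hexp hε)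

theorem tendsto_upperTailRatio_of_indepFun (he₁ : Measurable e₁) (hind : IndepFun e₁ e₂ μ) :
    Tendsto (upperTailRatio μ e₁ e₂) atTop (𝓝 0) := by
  refine squeeze_zero (fun _ => div_nonneg measureReal_nonneg measureReal_nonneg) (fun u => ?_)
    (tendsto_survivalFun_atTop (μ := μ) he₁)
  have hprod : μ.real {ω | u < e₁ ω ∧ u < e₂ ω} = survivalFun μ e₁ u * survivalFun μ e₂ u := by
    have h := hind.measure_inter_preimage_eq_mul _ _ (measurableSet_Ioi (a := u))
      (measurableSet_Ioi (a := u))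
    rw [survivalFun, survivalFun, measureReal_def, measureReal_def, measureReal_def,
      ← ENNReal.toReal_mul]
    exact congrArg ENNReal.toReal h
  rw [upperTailRatio, hprod, mul_div_assoc]
  exact mul_le_of_le_one_right measureReal_nonneg (div_self_le_one _)

end TailBounds

theorem survivalFun_div_const {Ω : Type*} [MeasurableSpace Ω] {μ : Measure Ω} {X : Ω → ℝ}
    {c : ℝ} (hc : 0 < c) : survivalFun μ (fun ω => X ω / c) = fun u => survivalFun μ X (c * u) :=
  funext fun u => by simp only [survivalFun, lt_div_iff₀' hc]

theorem integrable_exp_of_map_eq_gaussianReal {Ω : Type*} [MeasurableSpace Ω] {μ : Measure Ω}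
    {e : Ω → ℝ} {m : ℝ} {v : ℝ≥0} (he : Measurable e) (hg : μ.map e = gaussianReal m v) :
    Integrable (fun ω => Real.exp (e ω)) μ := by
  have h := integrable_exp_mul_gaussianReal (μ := m) (v := v) 1
  rw [← hg, integrable_map_measure (by fun_prop) he.aemeasurable] at h
  simpa [Function.comp_def] using h

section Gaussian

variable {Ω : Type*} [MeasurableSpace Ω] {μ : Measure Ω} [IsProbabilityMeasure μ]
  {Y e₁ e₂ : Ω → ℝ} {m : ℝ} {v : ℝ≥0}

theorem tendsto_tailDependenceRatio_add_of_isRegularlyVarying (hY : Measurable Y)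
    (he₁ : Measurable e₁) (he₂ : Measurable e₂) (hind : IndepFun Y (fun ω => (e₁ ω, e₂ ω)) μ)
    {α : ℝ} (hRV : IsRegularlyVarying (survivalFun μ Y) α) (hv : v ≠ 0)
    (hg₁ : μ.map e₁ = gaussianReal m v) (hg₂ : μ.map e₂ = gaussianReal m v) :
    Tendsto (tailDependenceRatio μ (Y + e₁) (Y + e₂)) (𝓝[<] 1) (𝓝 1) := by
  have := Measure.isProbabilityMeasure_map (μ := μ) hY.aemeasurable
  have := Measure.isProbabilityMeasure_map (μ := μ) (hY.add he₂).aemeasurable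
  have hlaw₁ : μ.map (Y + e₁) = μ.map Y ∗ gaussianReal m v := by
    rw [(hind.comp measurable_id measurable_fst).map_add_eq_map_conv_map hY he₁, hg₁]
  have hlaw₂ : μ.map (Y + e₂) = μ.map Y ∗ gaussianReal m v := by
    rw [(hind.comp measurable_id measurable_snd).map_add_eq_map_conv_map hY he₂, hg₂]
  refine tendsto_tailDependenceRatio (hY.add he₁) (hY.add he₂) (hlaw₁.trans hlaw₂.symm)
    (continuous_cdf_of_absolutelyContinuous ?_) (strictMono_cdf_of_absolutelyContinuous ?_)
    (tendsto_upperTailRatio_add he₁ he₂ hind hRV (integrable_exp_of_map_eq_gaussianReal he₂ hg₂))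
  · exact hlaw₂ ▸ Measure.conv_absolutelyContinuous (gaussianReal_absolutelyContinuous m hv)
  · exact hlaw₂ ▸ Measure.absolutelyContinuous_conv (gaussianReal_absolutelyContinuous' m hv)

theorem tendsto_tailDependenceRatio_of_indepFun (he₁ : Measurable e₁) (he₂ : Measurable e₂)
    (hind : IndepFun e₁ e₂ μ) (hv : v ≠ 0) (hg₁ : μ.map e₁ = gaussianReal m v)
    (hg₂ : μ.map e₂ = gaussianReal m v) :
    Tendsto (tailDependenceRatio μ e₁ e₂) (𝓝[<] 1) (𝓝 0) :=
  tendsto_tailDependenceRatio he₁ he₂ (hg₁.trans hg₂.symm)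
    (hg₂ ▸ continuous_cdf_of_absolutelyContinuous (gaussianReal_absolutelyContinuous m hv))
    (hg₂ ▸ strictMono_cdf_of_absolutelyContinuous (gaussianReal_absolutelyContinuous' m hv))
    (tendsto_upperTailRatio_of_indepFun he₁ hind)

end Gaussian

theorem as_convergence_does_not_preserve_chi_general
    {Ω : Type*} [MeasurableSpace Ω] (μ : Measure Ω) [IsProbabilityMeasure μ]
    (X e1 e2 : Ω → ℝ) (hX : Measurable X) (he1 : Measurable e1) (he2 : Measurable e2)
    (ρ : ℝ)
    (hRV : ∀ t : ℝ, 0 < t →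
      Tendsto (fun x => (μ {ω | t * x < X ω}).toReal / (μ {ω | x < X ω}).toReal)
        atTop (nhds (t ^ (-ρ))))
    (hg1 : μ.map e1 = gaussianReal 0 1)
    (hg2 : μ.map e2 = gaussianReal 0 1)
    (hindep : iIndepFun ![X, e1, e2] μ) :
    (∀ ω, Tendsto (fun n : ℕ => (X ω / n + e1 ω, X ω / n + e2 ω)) atTop
        (nhds (e1 ω, e2 ω))) ∧
    (∀ n : ℕ, 1 ≤ n →
      Tendsto (fun q =>
          (μ {ω | q < (μ {ω' | X ω' / n + e1 ω' ≤ X ω / n + e1 ω}).toReal ∧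
                  q < (μ {ω' | X ω' / n + e2 ω' ≤ X ω / n + e2 ω}).toReal}).toReal /
            (μ {ω | q < (μ {ω' | X ω' / n + e2 ω' ≤ X ω / n + e2 ω}).toReal}).toReal)
        (nhdsWithin 1 (Set.Iio 1)) (nhds 1)) ∧
    Tendsto (fun q =>
        (μ {ω | q < (μ {ω' | e1 ω' ≤ e1 ω}).toReal ∧
                q < (μ {ω' | e2 ω' ≤ e2 ω}).toReal}).toReal /
          (μ {ω | q < (μ {ω' | e2 ω' ≤ e2 ω}).toReal}).toReal)
      (nhdsWithin 1 (Set.Iio 1)) (nhds 0) := by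
  have hmeas : ∀ i, Measurable (![X, e1, e2] i) := fun i => by fin_cases i <;> assumption
  have hXe : IndepFun X (fun ω => (e1 ω, e2 ω)) μ :=
    (hindep.indepFun_prodMk hmeas 1 2 0 (by decide) (by decide)).symm
  have hRVX : IsRegularlyVarying (survivalFun μ X) (-ρ) := hRV
  refine ⟨fun ω => ?_, fun n hn => ?_, ?_⟩
  · have h := tendsto_const_div_atTop_nhds_zero_nat (X ω)
    simpa using (h.add_const (e1 ω)).prodMk_nhds (h.add_const (e2 ω))
  · have hn : (0 : ℝ) < n := by exact_mod_cast hn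
    exact tendsto_tailDependenceRatio_add_of_isRegularlyVarying (hX.div_const _) he1 he2
      (hXe.comp (measurable_id.div_const _) measurable_id)
      (survivalFun_div_const (μ := μ) (X := X) hn ▸ hRVX.comp_mul_left hn) one_ne_zero hg1 hg2
  · exact tendsto_tailDependenceRatio_of_indepFun he1 he2
      (hindep.indepFun (i := 1) (j := 2) (by decide)) one_ne_zero hg1 hg2

/-- The counterexample: `X₁ₙ = X/n + ε₁`, `X₂ₙ = X/n + ε₂` with `X`
regularly varying and `ε₁, ε₂` independent standard Gaussians converge (surely, hence
almost surely) to `(ε₁, ε₂)`, yet for each fixed `n ≥ 1` the tail dependence coefficient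
is `1`, while for the limit `(ε₁, ε₂)` it is `0`. -/
theorem as_convergence_does_not_preserve_chi
    {Ω : Type*} [MeasurableSpace Ω] (μ : Measure Ω) [IsProbabilityMeasure μ]
    (X e1 e2 : Ω → ℝ) (hX : Measurable X) (he1 : Measurable e1) (he2 : Measurable e2)
    (hXpos : ∀ ω, 0 ≤ X ω) (ρ : ℝ) (hρ : 0 < ρ)
    (hRV : ∀ t : ℝ, 0 < t →
      Tendsto (fun x => (μ {ω | t * x < X ω}).toReal / (μ {ω | x < X ω}).toReal)
        atTop (nhds (t ^ (-ρ))))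
    (hg1 : μ.map e1 = gaussianReal 0 1)
    (hg2 : μ.map e2 = gaussianReal 0 1)
    (hindep : iIndepFun ![X, e1, e2] μ) :
    (∀ ω, Tendsto (fun n : ℕ => (X ω / n + e1 ω, X ω / n + e2 ω)) atTop
        (nhds (e1 ω, e2 ω))) ∧
    (∀ n : ℕ, 1 ≤ n →
      Tendsto (fun q =>
          (μ {ω | q < (μ {ω' | X ω' / n + e1 ω' ≤ X ω / n + e1 ω}).toReal ∧
                  q < (μ {ω' | X ω' / n + e2 ω' ≤ X ω / n + e2 ω}).toReal}).toReal /
            (μ {ω | q < (μ {ω' | X ω' / n + e2 ω' ≤ X ω / n + e2 ω}).toReal}).toReal)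
        (nhdsWithin 1 (Set.Iio 1)) (nhds 1)) ∧
    Tendsto (fun q =>
        (μ {ω | q < (μ {ω' | e1 ω' ≤ e1 ω}).toReal ∧
                q < (μ {ω' | e2 ω' ≤ e2 ω}).toReal}).toReal /
          (μ {ω | q < (μ {ω' | e2 ω' ≤ e2 ω}).toReal}).toReal)
      (nhdsWithin 1 (Set.Iio 1)) (nhds 0) :=
  as_convergence_does_not_preserve_chi_general μ X e1 e2 hX he1 he2 ρ hRV hg1 hg2 hindep
end

section
/- Let $Y_1$ have a symmetric distribution with MGF finite on $[0,\sqrt{\psi}]$ for some $\psi>0$, fix $0\leq a_{12}<a_{22}<1$, and set $c=\{\log M_{Y_1}(a_{22}\sqrt{\psi})-\log M_{Y_1}(a_{12}\sqrt{\psi})\}/\sqrt{\psi}$. Define $\chi=\frac{\int_{(a_{22}-a_{12})y\leq c}e^{a_{22}\sqrt{\psi}y}\,dF_{Y_1}(y)}{M_{Y_1}(a_{22}\sqrt{\psi})}+\frac{\int_{(a_{22}-a_{12})y>c}e^{a_{12}\sqrt{\psi}y}\,dF_{Y_1}(y)}{M_{Y_1}(a_{12}\sqrt{\psi})}$. Then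 $\chi<1$. -/
open MeasureTheory

/-- With `Y` symmetric, MGF finite on `[0,√ψ]`, unbounded upper support,
`0 ≤ a₁₂ < a₂₂ < 1` and `c = (log M(a₂₂√ψ) - log M(a₁₂√ψ))/√ψ`, the tail dependence
coefficient `χ = E[e^{a₂₂√ψ Y}; (a₂₂-a₁₂)Y ≤ c]/M(a₂₂√ψ) +
E[e^{a₁₂√ψ Y}; (a₂₂-a₁₂)Y > c]/M(a₁₂√ψ)` is strictly less than 1. -/
theorem chi_lt_one
    {Ω : Type*} [MeasurableSpace Ω] (μ : Measure Ω) [IsProbabilityMeasure μ]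
    (Y : Ω → ℝ) (hY : Measurable Y) (ψ : ℝ) (hψ : 0 < ψ)
    (hsym : μ.map Y = μ.map (fun ω => -Y ω))
    (hMGF : ∀ t ∈ Set.Icc (0:ℝ) (Real.sqrt ψ),
      Integrable (fun ω => Real.exp (t * Y ω)) μ)
    (hub : ∀ r : ℝ, 0 < μ {ω | r < Y ω})
    (a12 a22 : ℝ) (h12 : 0 ≤ a12) (hlt : a12 < a22) (h22 : a22 < 1)
    (M22 M12 c : ℝ)
    (hM22 : M22 = ∫ ω, Real.exp (a22 * Real.sqrt ψ * Y ω) ∂μ)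
    (hM12 : M12 = ∫ ω, Real.exp (a12 * Real.sqrt ψ * Y ω) ∂μ)
    (hcdef : c = (Real.log M22 - Real.log M12) / Real.sqrt ψ) :
    (∫ ω in {ω | (a22 - a12) * Y ω ≤ c}, Real.exp (a22 * Real.sqrt ψ * Y ω) ∂μ) / M22 +
      (∫ ω in {ω | c < (a22 - a12) * Y ω}, Real.exp (a12 * Real.sqrt ψ * Y ω) ∂μ) / M12
      < 1 := by
  set s := Real.sqrt ψ with hs_def
  have hs : 0 < s := Real.sqrt_pos.mpr hψ
  have h22s : a22 * s ∈ Set.Icc (0:ℝ) s :=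
    ⟨mul_nonneg (h12.trans hlt.le) hs.le, by nlinarith⟩
  have h12s : a12 * s ∈ Set.Icc (0:ℝ) s :=
    ⟨mul_nonneg h12 hs.le, by nlinarith⟩
  have int22 : Integrable (fun ω => Real.exp (a22 * s * Y ω)) μ := hMGF _ h22s
  have int12 : Integrable (fun ω => Real.exp (a12 * s * Y ω)) μ := hMGF _ h12s
  have hμ : μ ≠ 0 := IsProbabilityMeasure.ne_zero μ
  have hM22pos : 0 < M22 := hM22 ▸ integral_exp_pos int22
  have hM12pos : 0 < M12 := hM12 ▸ integral_exp_pos int12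
  set B : Set Ω := {ω | c < (a22 - a12) * Y ω} with hB_def
  have hBmeas : MeasurableSet B := measurableSet_lt measurable_const (hY.const_mul _)
  have hBeq : B = {ω | c / (a22 - a12) < Y ω} := by
    ext ω
    simp only [hB_def, Set.mem_setOf_eq]
    rw [div_lt_iff₀' (by linarith)]
  have hBpos : 0 < μ B := by rw [hBeq]; exact hub _
  have hAeq : {ω | (a22 - a12) * Y ω ≤ c} = Bᶜ := by
    ext ω; simp [hB_def, not_lt]
  have hsplit : (∫ ω in Bᶜ, Real.exp (a22 * s * Y ω) ∂μ)
      = M22 - ∫ ω in B, Real.exp (a22 * s * Y ω) ∂μ := by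
    have := integral_add_compl hBmeas int22
    rw [hM22]; linarith
  rw [hAeq, hsplit]
  -- suffices to show ∫_B g / M12 < ∫_B f / M22
  have key : (∫ ω in B, Real.exp (a12 * s * Y ω) ∂μ) / M12
      < (∫ ω in B, Real.exp (a22 * s * Y ω) ∂μ) / M22 := by
    rw [div_lt_div_iff₀ hM12pos hM22pos, ← integral_mul_const, ← integral_mul_const,
      ← sub_pos, ← integral_sub ((int22.integrableOn).mul_const _)
        ((int12.integrableOn).mul_const _)]
    have hpt : ∀ ω ∈ B, Real.exp (a12 * s * Y ω) * M22 < Real.exp (a22 * s * Y ω) * M12 := by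
      intro ω hω
      have hω' : c < (a22 - a12) * Y ω := hω
      have hcs : c * s = Real.log M22 - Real.log M12 := by
        rw [hcdef]; field_simp
      calc Real.exp (a12 * s * Y ω) * M22
          = Real.exp (a12 * s * Y ω + Real.log M22) := by
            rw [Real.exp_add, Real.exp_log hM22pos]
        _ < Real.exp (a22 * s * Y ω + Real.log M12) := by
            apply Real.exp_lt_exp.mpr
            nlinarith [mul_lt_mul_of_pos_right hω' hs]
        _ = Real.exp (a22 * s * Y ω) * M12 := by
            rw [Real.exp_add, Real.exp_log hM12pos]
    rw [setIntegral_pos_iff_support_of_nonneg_ae]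
    · refine hBpos.trans_le (measure_mono ?_)
      intro ω hω
      exact ⟨by simpa using (sub_pos.mpr (hpt ω hω)).ne', hω⟩
    · filter_upwards [ae_restrict_mem hBmeas] with ω hω
      exact (sub_pos.mpr (hpt ω hω)).le
    · exact ((int22.integrableOn).mul_const _).sub ((int12.integrableOn).mul_const _)
  have h1 : (M22 - ∫ ω in B, Real.exp (a22 * s * Y ω) ∂μ) / M22
      = 1 - (∫ ω in B, Real.exp (a22 * s * Y ω) ∂μ) / M22 := by
    field_simp
  rw [h1]; linarith
end
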